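/- arXiv:cs/0203004 — 5 statements merged into one kernel-verified Lean document; each statement's English description precedes it below -/
import Mathlib

section
/- Main cumulativity theorem: Suppose d satisfies Equation onethree, and for each information set F there is a unique closest stereotype S^F (i.e., d(F, S^F) ≤ d(F, S) for all stereotypes S, and any stereotype attaining this minimum equals S^F). Then for any F, F' with F ∩ S^F ⊆ F' ⊆ F, we have S^{F'} = S^F. -/
theorem stmt_1 {W : Type*} {D : Type*} [PartialOrder D]
    (𝒮 : Set (Set W)) (d : Set W → Set W → D)
    (onethree : ∀ (F F' S S' : Set W),
      F' ∩ S' ⊆ F ∩ S → S \ F ⊆ S' \ F' → d F S ≤ d F' S')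
    (Sf : Set W → Set W)
    (hmem : ∀ F, Sf F ∈ 𝒮)
    (hmin : ∀ F, ∀ S ∈ 𝒮, d F (Sf F) ≤ d F S)
    (huniq : ∀ F, ∀ S ∈ 𝒮, (∀ T ∈ 𝒮, d F S ≤ d F T) → S = Sf F)
    (F F' : Set W) (h1 : F ∩ Sf F ⊆ F') (h2 : F' ⊆ F) :
    Sf F' = Sf F := by
  symm
  apply huniq F' (Sf F) (hmem F)
  intro T hT
  have hA : d F' (Sf F) ≤ d F (Sf F) := by
    apply onethree
    · intro x hx; exact ⟨h1 hx, hx.2⟩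
    · intro x hx
      exact ⟨hx.1, fun hxF => hx.2 (h1 ⟨hxF, hx.1⟩)⟩
  have hB : d F T ≤ d F' T := by
    apply onethree
    · intro x hx; exact ⟨h2 hx.1, hx.2⟩
    · intro x hx; exact ⟨hx.1, fun h => hx.2 (h2 h)⟩
  exact hA.trans ((hmin F T hT).trans hB)
end

section
/- Under the assumptions of the main cumulativity theorem, if F ∩ S^F ⊆ F' ⊆ F then F ∩ S^F = F' ∩ S^{F'}. -/
theorem stmt_2 {W : Type*} {D : Type*} [PartialOrder D]
    (𝒮 : Set (Set W)) (d : Set W → Set W → D)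
    (onethree : ∀ (F F' S S' : Set W),
      F' ∩ S' ⊆ F ∩ S → S \ F ⊆ S' \ F' → d F S ≤ d F' S')
    (Sf : Set W → Set W)
    (hmem : ∀ F, Sf F ∈ 𝒮)
    (hmin : ∀ F, ∀ S ∈ 𝒮, d F (Sf F) ≤ d F S)
    (huniq : ∀ F, ∀ S ∈ 𝒮, (∀ T ∈ 𝒮, d F S ≤ d F T) → S = Sf F)
    (F F' : Set W) (h1 : F ∩ Sf F ⊆ F') (h2 : F' ⊆ F) :
    F ∩ Sf F = F' ∩ Sf F' := by
  -- F ∩ Sf F = F' ∩ Sf F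
  have hint : F ∩ Sf F = F' ∩ Sf F := by
    apply Set.Subset.antisymm
    · intro x hx
      exact ⟨h1 hx, hx.2⟩
    · intro x hx
      exact ⟨h2 hx.1, hx.2⟩
  -- d F (Sf F') ≤ d F' (Sf F')
  have hb : d F (Sf F') ≤ d F' (Sf F') := by
    apply onethree
    · intro x hx; exact ⟨h2 hx.1, hx.2⟩
    · intro x hx; exact ⟨hx.1, fun h => hx.2 (h2 h)⟩
  -- d F' (Sf F) ≤ d F (Sf F)
  have hd : d F' (Sf F) ≤ d F (Sf F) := by
    apply onethree
    · rw [hint]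
    · intro x hx
      refine ⟨hx.1, fun h => hx.2 (h1 ⟨h, hx.1⟩)⟩
  have hc : d F' (Sf F') ≤ d F' (Sf F) := hmin F' (Sf F) (hmem F)
  have ha : d F (Sf F) ≤ d F (Sf F') := hmin F (Sf F') (hmem F')
  have heq : d F (Sf F') = d F (Sf F) :=
    le_antisymm (hb.trans (hc.trans hd)) ha
  have hkey : Sf F' = Sf F := by
    apply huniq F (Sf F') (hmem F')
    intro T hT
    rw [heq]
    exact hmin F T hT
  rw [hkey, ← hint]
end

section
/- Cut: Define the nonmonotonic consequence relation F |~ G (for sets of models F, G interpreted as: all elements of F ∩ S^F belong to G). Under Equation onethree and assumption zero, if F |~ G and F ∩ G |~ H then F |~ H. -/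
theorem stmt_3 {W : Type*} {D : Type*} [PartialOrder D]
    (𝒮 : Set (Set W)) (d : Set W → Set W → D)
    (onethree : ∀ (F F' S S' : Set W),
      F' ∩ S' ⊆ F ∩ S → S \ F ⊆ S' \ F' → d F S ≤ d F' S')
    (Sf : Set W → Set W)
    (hmem : ∀ F, Sf F ∈ 𝒮)
    (hmin : ∀ F, ∀ S ∈ 𝒮, d F (Sf F) ≤ d F S)
    (huniq : ∀ F, ∀ S ∈ 𝒮, (∀ T ∈ 𝒮, d F S ≤ d F T) → S = Sf F)
    (F G H : Set W)
    (hFG : F ∩ Sf F ⊆ G) (hFGH : (F ∩ G) ∩ Sf (F ∩ G) ⊆ H) :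
    F ∩ Sf F ⊆ H := by
  -- d (F∩G) (Sf F) ≤ d F (Sf F)
  have h1 : d (F ∩ G) (Sf F) ≤ d F (Sf F) := by
    apply onethree
    · intro x hx
      exact ⟨⟨hx.1, hFG ⟨hx.1, hx.2⟩⟩, hx.2⟩
    · intro x hx
      refine ⟨hx.1, fun hxF => hx.2 ⟨hxF, hFG ⟨hxF, hx.1⟩⟩⟩
  -- d F S ≤ d (F∩G) S for all S
  have h2 : ∀ S : Set W, d F S ≤ d (F ∩ G) S := by
    intro S
    apply onethree
    · intro x hx; exact ⟨hx.1.1, hx.2⟩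
    · intro x hx; exact ⟨hx.1, fun hxF => hx.2 hxF.1⟩
  have key : Sf F = Sf (F ∩ G) := by
    apply huniq (F ∩ G) (Sf F) (hmem F)
    intro T hT
    calc d (F ∩ G) (Sf F) ≤ d F (Sf F) := h1
      _ ≤ d F T := hmin F T hT
      _ ≤ d (F ∩ G) T := h2 T
  intro x hx
  exact hFGH ⟨⟨hx.1, hFG hx⟩, key ▸ hx.2⟩
end

section
/- Cautious Monotonicity: Under Equation onethree and assumption zero, if F |~ G and F |~ H then F ∩ G |~ H. -/
theorem stmt_4 {W : Type*} {D : Type*} [PartialOrder D]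
    (𝒮 : Set (Set W)) (d : Set W → Set W → D)
    (onethree : ∀ (F F' S S' : Set W),
      F' ∩ S' ⊆ F ∩ S → S \ F ⊆ S' \ F' → d F S ≤ d F' S')
    (Sf : Set W → Set W)
    (hmem : ∀ F, Sf F ∈ 𝒮)
    (hmin : ∀ F, ∀ S ∈ 𝒮, d F (Sf F) ≤ d F S)
    (huniq : ∀ F, ∀ S ∈ 𝒮, (∀ T ∈ 𝒮, d F S ≤ d F T) → S = Sf F)
    (F G H : Set W)
    (hFG : F ∩ Sf F ⊆ G) (hFH : F ∩ Sf F ⊆ H) :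
    (F ∩ G) ∩ Sf (F ∩ G) ⊆ H := by
  have h1 : d (F ∩ G) (Sf F) ≤ d F (Sf F) := by
    apply onethree
    · intro x hx
      exact ⟨⟨hx.1, hFG hx⟩, hx.2⟩
    · intro x hx
      exact ⟨hx.1, fun hxF => hx.2 ⟨hxF, hFG ⟨hxF, hx.1⟩⟩⟩
  have key : Sf F = Sf (F ∩ G) := by
    apply huniq _ _ (hmem F)
    intro T hT
    have h2 : d F T ≤ d (F ∩ G) T := by
      apply onethree
      · intro x hx; exact ⟨hx.1.1, hx.2⟩
      · intro x hx; exact ⟨hx.1, fun h => hx.2 h.1⟩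
    exact le_trans h1 (le_trans (hmin F T hT) h2)
  rw [← key]
  intro x hx
  exact hFH ⟨hx.1.1, hx.2⟩
end

section
/- In Example 4 with k ≥ 2, Or (preferentiality) can fail: there exists an instance of the partition model and sets F, F', G with F |~ G and F' |~ G but not (F ∪ F') |~ G. -/
theorem stmt_19 :
    ∃ (n k : ℕ) (S : Fin k → Finset (Fin n)) (F F' G : Finset (Fin n))
      (SF SF' SU : Fin k),
      (∀ i, (S i).Nonempty) ∧
      (∀ i j, i ≠ j → Disjoint (S i) (S j)) ∧
      (Finset.univ.biUnion S = Finset.univ) ∧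
      (∀ j, ((S SF \ F).card : ℚ) + (SF : ℚ) / k ≤ ((S j \ F).card : ℚ) + (j : ℚ) / k) ∧
      (∀ j, ((S SF' \ F').card : ℚ) + (SF' : ℚ) / k ≤ ((S j \ F').card : ℚ) + (j : ℚ) / k) ∧
      (∀ j, ((S SU \ (F ∪ F')).card : ℚ) + (SU : ℚ) / k ≤ ((S j \ (F ∪ F')).card : ℚ) + (j : ℚ) / k) ∧
      F ∩ S SF ⊆ G ∧ F' ∩ S SF' ⊆ G ∧ ¬ ((F ∪ F') ∩ S SU ⊆ G) := by
  refine ⟨4, 2, ![{0,1},{2,3}], {0,3}, {2}, {0,2}, 0, 1, 1, ?_, ?_, ?_, ?_, ?_, ?_, ?_, ?_, ?_⟩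
  · intro i; fin_cases i <;> decide
  · intro i j h; fin_cases i <;> fin_cases j <;> first | exact absurd rfl h | decide
  · decide
  · intro j; fin_cases j <;>
      norm_num [show ({1} \ ({0,3}:Finset (Fin 4))).card = 1 from by decide,
        show ({2,3} \ ({0,3}:Finset (Fin 4))).card = 1 from by decide,
        show ({0,1} \ ({0,3}:Finset (Fin 4))).card = 1 from by decide]
  · intro j; fin_cases j <;>
      norm_num [show ({0,1} \ ({2}:Finset (Fin 4))).card = 2 from by decide,
        show ({2,3} \ ({2}:Finset (Fin 4))).card = 1 from by decide]
  · intro j; fin_cases j <;>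
      norm_num [show ({1} \ (insert 0 ({3} ∪ {2}) : Finset (Fin 4))).card = 1 from by decide,
        show ({0,1} \ (insert 0 ({3} ∪ {2}) : Finset (Fin 4))).card = 1 from by decide,
        show ({2,3} \ (insert 0 ({3} ∪ {2}) : Finset (Fin 4))).card = 0 from by decide,
        show ({1} \ ({0,3,2} : Finset (Fin 4))).card = 1 from by decide,
        show ({0,1} \ ({0,3,2} : Finset (Fin 4))).card = 1 from by decide,
        show ({2,3} \ ({0,3,2} : Finset (Fin 4))).card = 0 from by decide]
  · decide
  · decide
  · decide
end
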